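/- arXiv:math/0409373 — 2 statements merged into one kernel-verified Lean document; each statement's English description precedes it below -/
import Mathlib

section
/- Let Z be the set of all r ∈ ℂ((z))[[λ]] such that the constant λ-term r(z,0) lies in ℂ[[z]] and is a unit of ℂ[[z]] (every such r is invertible in ℂ((z))[[λ]]), and let dlog : Z → ℂ((z))[[λ]] be the map r ↦ r⁻¹·(dr/dz). Then the image of dlog is exactly the set of s ∈ ℂ((z))[[λ]] such that s(z,0) ∈ ℂ[[z]] and res_{z=0} s = 0, i.e., every λ-coefficient of s has zero residue. -/
open PowerSeries

noncomputable section

/-- `K = ℂ((z))`, the field of formal Laurent series. -/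
abbrev K : Type := LaurentSeries ℂ

/-- The formal derivative `d/dz` on Laurent series. -/
def lD (f : K) : K where
  coeff n := ((n : ℂ) + 1) * f.coeff (n + 1)
  isPWO_support' := by
    apply Set.IsPWO.mono ((f.isPWO_support).image_of_monotone
      (f := fun m : ℤ => m - 1) (fun a b hab => by simpa using hab))
    intro n hn
    refine ⟨n + 1, ?_, by ring⟩
    intro h0
    apply hn
    simp [h0]

/-- `ℂ[[z]]` viewed as a subring of `ℂ((z))`. -/
def Oz : Subring K := (HahnSeries.ofPowerSeries ℤ ℂ).range

/-- `h ∈ ℂ[[z]]` has a simple zero at `z = 0`. -/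
def SimpleZero (h : PowerSeries ℂ) : Prop :=
  PowerSeries.coeff (R := ℂ) 0 h = 0 ∧ PowerSeries.coeff (R := ℂ) 1 h ≠ 0

/-- `K̂ = ℂ((z))[[λ]]`, formal power series in `λ` with Laurent series coefficients. -/
abbrev Khat : Type := PowerSeries K

/-- The `λ`-coefficientwise formal derivative `d/dz` on `ℂ((z))[[λ]]`. -/
def pD (F : Khat) : Khat := PowerSeries.mk fun i => lD (PowerSeries.coeff (R := K) i F)

/-- `F ∈ ℂ[[z,λ]]`: every `λ`-coefficient of `F` lies in `ℂ[[z]]`. -/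
def MemOhat (F : Khat) : Prop := ∀ i, PowerSeries.coeff (R := K) i F ∈ Oz

/-- The `λ`-gauge transform `Gauge_λ(A,R) = R⁻¹AR + λ·R⁻¹·(dR/dz)`. -/
def lamGauge (A R : Matrix (Fin 2) (Fin 2) Khat) : Matrix (Fin 2) (Fin 2) Khat :=
  R⁻¹ * A * R + (PowerSeries.X : Khat) • (R⁻¹ * R.map pD)

/-- The constant term in `λ`: `F(z,0)`. -/
def ev0 : Khat →+* K := PowerSeries.constantCoeff (R := K)

/-- The residue of a Laurent series: the coefficient of `z⁻¹`. -/
def res (f : K) : ℂ := f.coeff (-1)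

/-- The residue of an element of `ℂ((z))[[λ]]`, an element of `ℂ[[λ]]`. -/
def resHat (F : Khat) : PowerSeries ℂ := PowerSeries.mk fun i => res (PowerSeries.coeff (R := K) i F)


/-! Write `r = c·(1 + w)` with `c = r(z,0)` a unit of `ℂ[[z]]` and `w(z,0) = 0`. Then
`dlog r = c⁻¹c' + d/dz log(1 + w)`: the first term lies in `ℂ[[z]]` and the second is a
derivative, so it has no residues. Conversely, if `s(z,0) = q ∈ ℂ[[z]]` and `s` has no residues,
then `s - q = dw/dz` for some `w` with `w(z,0) = 0`, and `r = exp(∫q)·exp(w)` has `dlog r = s`.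
The chain rule for `exp(w)` and `log(1 + w)` reduces to polynomials, because the `λⁿ`-coefficient
of `f(w)` only involves the terms of `f` of degree at most `n`. -/

namespace LaurentSeries

/-- The Euler operator `z d/dz`: it acts diagonally on coefficients, so its Leibniz rule is a
coefficientwise identity. -/
def zD (f : K) : K where
  coeff n := (n : ℂ) * f.coeff n
  isPWO_support' := f.isPWO_support.mono fun n hn h => hn (by simp [h])

lemma zD_coeff (f : K) (n : ℤ) : (zD f).coeff n = n * f.coeff n := rfl

lemma support_zD_subset (f : K) : (zD f).support ⊆ f.support :=
  fun n hn h => hn (by simp [zD_coeff, h])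

lemma zD_mul (x y : K) : zD (x * y) = zD x * y + x * zD y := by
  ext a
  rw [HahnSeries.coeff_add, zD_coeff, HahnSeries.coeff_mul,
    HahnSeries.coeff_mul_left' x.isPWO_support (support_zD_subset x),
    HahnSeries.coeff_mul_right' y.isPWO_support (support_zD_subset y), Finset.mul_sum,
    ← Finset.sum_add_distrib]
  refine Finset.sum_congr rfl fun ij hij => ?_
  rw [Finset.mem_antidiagonal] at hij
  rw [zD_coeff, zD_coeff, ← hij.2.2]
  push_cast
  ring

lemma lD_coeff (f : K) (n : ℤ) : (lD f).coeff n = ((n : ℂ) + 1) * f.coeff (n + 1) := rfl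

lemma lD_eq_single_mul_zD (f : K) : lD f = HahnSeries.single (-1) 1 * zD f := by
  ext n
  have := HahnSeries.coeff_single_mul_add (r := (1 : ℂ)) (x := zD f) (b := -1) (a := n + 1)
  rw [show n + 1 + -1 = n by ring] at this
  rw [this, one_mul, zD_coeff, lD_coeff]
  push_cast
  ring

lemma lD_mul (x y : K) : lD (x * y) = lD x * y + x * lD y := by
  simp only [lD_eq_single_mul_zD, zD_mul]
  ring

lemma lD_add (x y : K) : lD (x + y) = lD x + lD y := by
  ext n
  simp only [lD_coeff, HahnSeries.coeff_add, mul_add]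

def lDHom : K →+ K := AddMonoidHom.mk' lD lD_add

lemma lD_zero : lD 0 = 0 := map_zero lDHom

lemma lD_one : lD 1 = 0 := by
  ext n
  rw [lD_coeff, HahnSeries.coeff_one]
  split_ifs with h
  · have : (n : ℂ) + 1 = 0 := by exact_mod_cast h
    simp [this]
  · simp

lemma lD_ofPowerSeries (p : ℂ⟦X⟧) :
    lD (HahnSeries.ofPowerSeries ℤ ℂ p) = HahnSeries.ofPowerSeries ℤ ℂ (d⁄dX ℂ p) := by
  ext n
  rw [lD_coeff, PowerSeries.coeff_coe, PowerSeries.coeff_coe]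
  rcases n with m | m
  · have : ((m : ℤ) + 1).natAbs = m + 1 := by omega
    simp [coeff_derivative, this, mul_comm, show ¬ (m : ℤ) + 1 < 0 by omega]
  · simp only [Int.negSucc_lt_zero, if_true]
    split_ifs with h
    · rw [mul_zero]
    · simp [show m = 0 by omega]

lemma res_lD (f : K) : res (lD f) = 0 := by
  simp [res, lD_coeff]

lemma res_eq_zero_of_mem_Oz {f : K} (hf : f ∈ Oz) : res f = 0 := by
  obtain ⟨p, rfl⟩ := hf
  simp [res, PowerSeries.coeff_coe]

/-- At `n = 0` the division by `0` gives `0`, so the antiderivative has no constant term. -/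
def antideriv (f : K) : K where
  coeff n := f.coeff (n - 1) / n
  isPWO_support' := (f.isPWO_support.image_of_monotone (f := fun m : ℤ => m + 1)
    fun _ _ h => by simpa using h).mono fun n hn =>
      ⟨n - 1, fun h => hn (by simp [h]), by simp⟩

lemma lD_antideriv {f : K} (hf : res f = 0) : lD (antideriv f) = f := by
  ext n
  rw [lD_coeff]
  change _ * (f.coeff (n + 1 - 1) / ((n + 1 : ℤ) : ℂ)) = _
  rw [add_sub_cancel_right]
  rcases eq_or_ne n (-1) with rfl | hn
  · simpa [res] using hf.symm
  · have : (n : ℂ) + 1 ≠ 0 := by exact_mod_cast (by omega : n + 1 ≠ 0)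
    push_cast
    field_simp

end LaurentSeries

namespace PowerSeries

lemma subst_one {A S : Type*} [CommRing A] [CommRing S] [Algebra A S] {a : S⟦X⟧}
    (ha : HasSubst a) : (1 : A⟦X⟧).subst a = 1 := by
  rw [← coe_substAlgHom ha, map_one]

lemma constantCoeff_exp_subst {A S : Type*} [CommRing A] [Algebra ℚ A] [CommRing S] [Algebra A S]
    {a : S⟦X⟧} (ha : constantCoeff a = 0) : constantCoeff ((exp A).subst a) = 1 := by
  have hs : HasSubst a := HasSubst.of_constantCoeff_zero' ha
  have := constantCoeff_subst_eq_zero ha (exp A - 1) (by simp [constantCoeff_exp])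
  rwa [subst_sub hs, subst_one hs, map_sub, sub_eq_zero] at this

lemma one_add_X_mul_derivative_log (A : Type*) [CommRing A] [Algebra ℚ A] :
    (1 + X) * d⁄dX A (log A) = 1 := by
  rw [deriv_log]
  ext (_ | n) <;> simp [add_mul, coeff_one, pow_succ]

lemma X_pow_dvd_subst_sub_trunc {R S : Type*} [CommRing R] [CommRing S] [Algebra R S]
    {a : S⟦X⟧} (ha : constantCoeff a = 0) (f : R⟦X⟧) (N : ℕ) :
    X ^ N ∣ f.subst a - Polynomial.aeval a (trunc N f) := by
  have hs : HasSubst a := HasSubst.of_constantCoeff_zero' ha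
  obtain ⟨h, hh⟩ : X ^ N ∣ f - (trunc N f : R⟦X⟧) := X_pow_dvd_iff.mpr fun m hm => by
    rw [map_sub, coeff_coe_trunc_of_lt hm, sub_self]
  rw [← subst_coe hs, ← subst_sub hs, hh, subst_mul hs, subst_pow hs, subst_X hs]
  exact (pow_dvd_pow_of_dvd (X_dvd_iff.mpr ha) N).mul_right _

def antideriv (q : ℂ⟦X⟧) : ℂ⟦X⟧ := mk fun n => coeff (n - 1) q / n

lemma constantCoeff_antideriv (q : ℂ⟦X⟧) : constantCoeff (antideriv q) = 0 := by
  rw [← coeff_zero_eq_constantCoeff_apply, antideriv, coeff_mk, Nat.cast_zero, div_zero]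

lemma derivative_antideriv (q : ℂ⟦X⟧) : d⁄dX ℂ (antideriv q) = q := by
  ext n
  rw [coeff_derivative, antideriv, coeff_mk, Nat.add_sub_cancel, Nat.cast_add_one,
    div_mul_cancel₀ _ (Nat.cast_add_one_ne_zero n)]

lemma exists_isUnit_derivative_eq_mul (q : ℂ⟦X⟧) :
    ∃ g : ℂ⟦X⟧, IsUnit g ∧ d⁄dX ℂ g = g * q := by
  have hQ := constantCoeff_antideriv q
  refine ⟨(exp ℂ).subst (antideriv q), ?_, ?_⟩
  · rw [isUnit_iff_constantCoeff, constantCoeff_exp_subst hQ]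
    exact isUnit_one
  · rw [derivative_subst (HasSubst.of_constantCoeff_zero' hQ), derivative_exp,
      derivative_antideriv]

end PowerSeries

open LaurentSeries

lemma inv_mul_lD_ofPowerSeries {g : ℂ⟦X⟧} (hg : IsUnit g) :
    (HahnSeries.ofPowerSeries ℤ ℂ g)⁻¹ * lD (HahnSeries.ofPowerSeries ℤ ℂ g) =
      HahnSeries.ofPowerSeries ℤ ℂ (↑hg.unit⁻¹ * d⁄dX ℂ g) := by
  rw [inv_eq_of_mul_eq_one_right (b := HahnSeries.ofPowerSeries ℤ ℂ ↑hg.unit⁻¹)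
    (by rw [← map_mul, hg.mul_val_inv, map_one]), lD_ofPowerSeries, ← map_mul]

lemma pD_coeff (F : Khat) (i : ℕ) : coeff i (pD F) = lD (coeff i F) := coeff_mk _ _

lemma constantCoeff_pD (F : Khat) : constantCoeff (pD F) = lD (constantCoeff F) := by
  rw [← coeff_zero_eq_constantCoeff_apply, pD_coeff, coeff_zero_eq_constantCoeff_apply]

lemma pD_add (F G : Khat) : pD (F + G) = pD F + pD G := by
  ext i : 1
  simp only [pD_coeff, map_add, lD_add]

lemma pD_mul (F G : Khat) : pD (F * G) = pD F * G + F * pD G := by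
  ext i : 1
  simp only [pD_coeff, map_add, coeff_mul, ← Finset.sum_add_distrib]
  exact (map_sum lDHom _ _).trans (Finset.sum_congr rfl fun p _ => lD_mul _ _)

lemma pD_C (f : K) : pD (C f) = C (lD f) := by
  ext i : 1
  rw [pD_coeff, coeff_C, coeff_C]
  split_ifs <;> simp [lD_zero]

def pDer : Derivation ℚ Khat Khat where
  toFun := pD
  map_add' := pD_add
  map_smul' c F := by
    rw [RingHom.id_apply]
    -- `ℚ` acts on `Khat` through `ℂ[[z]]` and coefficientwise, and the two actions are not
    -- definitionally equal; every additive map is `ℚ`-linear for any pair of them.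
    exact map_rat_smul (_instM := Algebra.toModule) (_instM₂ := MvPowerSeries.instModule)
      (AddMonoidHom.mk' pD pD_add) c F
  map_one_eq_zero' := by
    change pD 1 = 0
    rw [← map_one C, pD_C, lD_one, map_zero]
  leibniz' F G := by
    change pD (F * G) = F * pD G + G * pD F
    rw [pD_mul]
    ring

lemma pDer_apply (F : Khat) : pDer F = pD F := rfl

lemma X_pow_dvd_pD_sub {F G : Khat} {N : ℕ} (h : X ^ N ∣ F - G) : X ^ N ∣ pD F - pD G := by
  rw [X_pow_dvd_iff] at h ⊢
  intro m hm
  rw [map_sub, pD_coeff, pD_coeff]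
  change lDHom _ - lDHom _ = 0
  rw [← map_sub, ← map_sub, h m hm, map_zero]

lemma pD_subst {w : Khat} (hw : constantCoeff w = 0) (f : ℚ⟦X⟧) :
    pD (f.subst w) = (d⁄dX ℚ f).subst w * pD w := by
  suffices h : ∀ N, X ^ N ∣ pD (f.subst w) - (d⁄dX ℚ f).subst w * pD w by
    ext n : 1
    exact sub_eq_zero.mp (by rw [← map_sub]; exact X_pow_dvd_iff.mp (h (n + 1)) n n.lt_succ_self)
  intro N
  have h1 := X_pow_dvd_pD_sub
    ((pow_dvd_pow X N.le_succ).trans (X_pow_dvd_subst_sub_trunc hw f (N + 1)))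
  have h2 : pD (Polynomial.aeval w (trunc (N + 1) f)) =
      Polynomial.aeval w (trunc N (d⁄dX ℚ f)) * pD w := by
    rw [trunc_derivative, ← pDer_apply, Derivation.map_aeval, smul_eq_mul, pDer_apply]
  have h3 := (X_pow_dvd_subst_sub_trunc hw (d⁄dX ℚ f) N).mul_right (pD w)
  rw [h2] at h1
  rw [sub_mul] at h3
  simpa only [sub_sub_sub_cancel_right] using dvd_sub h1 h3

lemma exists_pD_eq_sub_C {s : Khat} (hs : ∀ i, res (coeff i s) = 0) :
    ∃ w : Khat, constantCoeff w = 0 ∧ pD w = s - C (constantCoeff s) := by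
  set v : Khat := mk fun i => antideriv (coeff i s)
  have hv : pD v = s := by
    ext i : 1
    rw [pD_coeff, coeff_mk, lD_antideriv (hs i)]
  refine ⟨v - C (constantCoeff v), by simp, ?_⟩
  rw [← pDer_apply, map_sub, pDer_apply, pDer_apply, pD_C, ← constantCoeff_pD, hv]

lemma constantCoeff_C_add_pD (a : K) {L : Khat} (hL : constantCoeff L = 0) :
    constantCoeff (C a + pD L) = a := by
  rw [map_add, constantCoeff_C, constantCoeff_pD, hL, lD_zero, add_zero]

lemma res_coeff_C_add_pD {a : K} (ha : a ∈ Oz) (L : Khat) (i : ℕ) :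
    res (coeff i (C a + pD L)) = 0 := by
  rw [map_add, pD_coeff, coeff_C, res, HahnSeries.coeff_add, ← res, ← res, res_lD, add_zero]
  split_ifs
  · exact res_eq_zero_of_mem_Oz ha
  · rfl

def dlog (r : Khat) : Khat := r⁻¹ * pD r

lemma dlog_mul {a b : Khat} (ha : constantCoeff a ≠ 0) (hb : constantCoeff b ≠ 0) :
    dlog (a * b) = dlog a + dlog b := by
  have ha' := PowerSeries.inv_mul_cancel a ha
  have hb' := PowerSeries.inv_mul_cancel b hb
  rw [dlog, dlog, dlog, PowerSeries.mul_inv_rev, pD_mul]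
  linear_combination (a⁻¹ * pD a) * hb' + (b⁻¹ * pD b) * ha'

lemma dlog_C (f : K) : dlog (C f) = C (f⁻¹ * lD f) := by
  rw [dlog, PowerSeries.C_inv, pD_C, ← map_mul]

lemma dlog_exp_subst {w : Khat} (hw : constantCoeff w = 0) :
    dlog ((exp ℚ).subst w) = pD w := by
  have h1 := constantCoeff_exp_subst (A := ℚ) hw
  rw [dlog, pD_subst hw, derivative_exp, ← mul_assoc,
    PowerSeries.inv_mul_cancel _ (by rw [h1]; exact one_ne_zero), one_mul]

lemma dlog_one_add {w : Khat} (hw : constantCoeff w = 0) :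
    dlog (1 + w) = pD ((log ℚ).subst w) := by
  have hs : HasSubst w := HasSubst.of_constantCoeff_zero' hw
  have hinv : (1 + w)⁻¹ = (d⁄dX ℚ (log ℚ)).subst w := by
    rw [PowerSeries.inv_eq_iff_mul_eq_one (by simp [hw]), mul_comm]
    calc (1 + w) * (d⁄dX ℚ (log ℚ)).subst w = ((1 + X) * d⁄dX ℚ (log ℚ)).subst w := by
          rw [subst_mul hs, subst_add hs, subst_one hs, subst_X hs]
      _ = 1 := by rw [one_add_X_mul_derivative_log, subst_one hs]
  rw [dlog, hinv, pD_subst hw, pD_add, ← map_one C, pD_C, lD_one, map_zero, zero_add]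

lemma exists_dlog_eq_C_add_pD {r : Khat} {f : K} (hr : constantCoeff r = f) (hf : f ≠ 0) :
    ∃ L : Khat, constantCoeff L = 0 ∧ dlog r = C (f⁻¹ * lD f) + pD L := by
  set w := C f⁻¹ * r - 1 with hw_def
  have hw : constantCoeff w = 0 := by simp [hw_def, hr, hf]
  have hr' : r = C f * (1 + w) := by
    rw [hw_def, add_sub_cancel, ← mul_assoc, ← map_mul, mul_inv_cancel₀ hf, map_one, one_mul]
  refine ⟨(log ℚ).subst w, constantCoeff_subst_eq_zero hw _ constantCoeff_log, ?_⟩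
  rw [hr', dlog_mul (by simp [hf]) (by simp [hw]), dlog_C, dlog_one_add hw]

lemma dlog_C_mul_exp_subst {f : K} (hf : f ≠ 0) {w : Khat} (hw : constantCoeff w = 0) :
    dlog (C f * (exp ℚ).subst w) = C (f⁻¹ * lD f) + pD w := by
  rw [dlog_mul (by simp [hf]) (by simp [constantCoeff_exp_subst hw]), dlog_C,
    dlog_exp_subst hw]

/-- The image of `dlog : r ↦ r⁻¹·(dr/dz)`, defined on the set `Z` of
`r ∈ ℂ((z))[[λ]]` whose constant `λ`-term is a unit of `ℂ[[z]]`, is exactly the set of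
`s ∈ ℂ((z))[[λ]]` with `s(z,0) ∈ ℂ[[z]]` and all residues zero. -/
theorem stmt8 (s : Khat) :
    (∃ r : Khat, (∃ g : PowerSeries ℂ, ev0 r = HahnSeries.ofPowerSeries ℤ ℂ g ∧ IsUnit g) ∧
        s = r⁻¹ * pD r) ↔
      (ev0 s ∈ Oz ∧ ∀ i, res (PowerSeries.coeff (R := K) i s) = 0) := by
  constructor
  · rintro ⟨r, ⟨g, hg, hgu⟩, rfl⟩
    have hf := (hgu.map (HahnSeries.ofPowerSeries ℤ ℂ)).ne_zero
    obtain ⟨L, hL, hrL⟩ := exists_dlog_eq_C_add_pD hg hf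
    change constantCoeff (dlog r) ∈ Oz ∧ ∀ i, res (coeff i (dlog r)) = 0
    rw [hrL, inv_mul_lD_ofPowerSeries hgu, constantCoeff_C_add_pD _ hL]
    exact ⟨⟨_, rfl⟩, res_coeff_C_add_pD ⟨_, rfl⟩ L⟩
  · rintro ⟨⟨q, hq⟩, hres⟩
    obtain ⟨g, hgu, hg'⟩ := exists_isUnit_derivative_eq_mul q
    obtain ⟨w, hw, hpw⟩ := exists_pD_eq_sub_C hres
    have hf := (hgu.map (HahnSeries.ofPowerSeries ℤ ℂ)).ne_zero
    refine ⟨C (HahnSeries.ofPowerSeries ℤ ℂ g) * (exp ℚ).subst w,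
      ⟨g, by simp [ev0, constantCoeff_exp_subst hw], hgu⟩, ?_⟩
    change s = dlog _
    rw [dlog_C_mul_exp_subst hf hw, inv_mul_lD_ofPowerSeries hgu, hg', ← mul_assoc,
      hgu.val_inv_mul, one_mul, hq, hpw]
    exact (add_sub_cancel _ _).symm
end
end

section
/- Let A = Σᵢ Aᵢ(z)λⁱ ∈ M₂(ℂ((z))[[λ]]) be such that every coefficient Aᵢ is a diagonal matrix, and let R ∈ M₂(ℂ((z))[[λ]]) be invertible over ℂ((z))[[λ]] with R(z,0) ∈ M₂(ℂ[[z]]) and det R(z,0) ∈ ℂ[[z]] having a simple zero at z = 0. If Gauge_λ(A,R) = R⁻¹AR + λR⁻¹(dR/dz) ∈ M₂(ℂ[[z,λ]]), then z·A₁ ∈ M₂(ℂ[[z]]), i.e., the coefficient of λ in A has entries with at most a first-order pole at z = 0. -/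
/-!
Write `R₀, R₁, A₀, A₁, B₀, B₁` for the `λ⁰`- and `λ¹`-coefficients of `R`, `A` and
`B = Gauge_λ(A,R)`. Comparing coefficients in `R B = A R + λ R'` gives `R₀ B₀ = A₀ R₀` and
`R₀ B₁ + R₁ B₀ = A₀ R₁ + A₁ R₀ + R₀'`. Multiply the second identity on the right by `adj R₀`.
By the first, `B₀ adj R₀ = adj R₀ A₀`, so the two terms containing the uncontrolled `R₁` become
`(R₁ adj R₀) A₀` and `A₀ (R₁ adj R₀)`, which have the same diagonal because `A₀` is diagonal.
What is left on the diagonal is `det R₀ · (A₁)ᵢᵢ = ((R₀ B₁ - R₀') adj R₀)ᵢᵢ ∈ ℂ[[z]]`, and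
`det R₀` is `z` times a unit of `ℂ[[z]]`.
-/

open PowerSeries

noncomputable section

/-- The Laurent series `z`. -/
def zK : K := HahnSeries.ofPowerSeries ℤ ℂ PowerSeries.X

open Matrix

section LinearAlgebra

variable {F ι : Type*} [CommRing F] [IsDomain F] [Fintype ι] [DecidableEq ι]

theorem Matrix.mul_adjugate_eq_adjugate_mul_of_mul_eq {R B A : Matrix ι ι F} (hR : R.det ≠ 0)
    (h : R * B = A * R) : B * R.adjugate = R.adjugate * A := by
  apply smul_right_injective _ hR
  calc R.det • (B * R.adjugate) = R.adjugate * (R * B) * R.adjugate := by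
        rw [← Matrix.mul_assoc, adjugate_mul, smul_mul, Matrix.one_mul, smul_mul]
    _ = R.det • (R.adjugate * A) := by
        rw [h, Matrix.mul_assoc, Matrix.mul_assoc, mul_adjugate, Matrix.mul_smul, Matrix.mul_one,
          Matrix.mul_smul]

theorem Matrix.det_mul_apply_self_eq_of_gauge_coeffs {R₀ R₁ B₀ B₁ A₀ A₁ D : Matrix ι ι F}
    (hA₀ : A₀.IsDiag) (hR₀ : R₀.det ≠ 0) (h₀ : R₀ * B₀ = A₀ * R₀)
    (h₁ : R₀ * B₁ + R₁ * B₀ = A₀ * R₁ + A₁ * R₀ + D) (i : ι) :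
    R₀.det * A₁ i i = ((R₀ * B₁ - D) * R₀.adjugate) i i := by
  have hB₀ := mul_adjugate_eq_adjugate_mul_of_mul_eq hR₀ h₀
  have e := congrArg (fun M => (M * R₀.adjugate) i i) h₁
  rw [← hA₀.diagonal_diag] at e hB₀
  simp only [Matrix.add_mul, Matrix.mul_assoc, hB₀, mul_adjugate, Matrix.mul_smul,
    Matrix.mul_one, add_apply, smul_apply, smul_eq_mul, diagonal_mul] at e
  rw [← Matrix.mul_assoc R₁, mul_diagonal] at e
  rw [Matrix.sub_mul, sub_apply, Matrix.mul_assoc]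
  linear_combination -e

end LinearAlgebra

theorem Matrix.exists_map_eq_of_forall_mem_range {A B m n : Type*} {f : A → B} (M : Matrix m n B)
    (hM : ∀ i j, M i j ∈ Set.range f) : ∃ P : Matrix m n A, P.map f = M := by
  choose P hP using hM
  exact ⟨P, ext hP⟩

theorem Matrix.map_coeff_one_mul {S l m n : Type*} [CommSemiring S] [Fintype m]
    (M : Matrix l m S⟦X⟧) (N : Matrix m n S⟦X⟧) :
    (M * N).map (coeff 1) =
      M.map constantCoeff * N.map (coeff 1) + M.map (coeff 1) * N.map constantCoeff := by
  ext i j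
  simp only [map_apply, mul_apply, add_apply, map_sum, coeff_one_mul, Finset.sum_add_distrib]
  rw [add_comm]
  congr 1
  exact Finset.sum_congr rfl fun _ _ => mul_comm _ _

theorem lD_ofPowerSeries (p : ℂ⟦X⟧) :
    lD (HahnSeries.ofPowerSeries ℤ ℂ p) = HahnSeries.ofPowerSeries ℤ ℂ (d⁄dX ℂ p) := by
  ext n
  show ((n : ℂ) + 1) * _ = _
  simp only [PowerSeries.coeff_coe, coeff_derivative]
  rcases lt_trichotomy n (-1) with hn | rfl | hn
  · rw [if_pos (by omega), if_pos (by omega), mul_zero]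
  · simp
  · lift n to ℕ using (by omega)
    rw [if_neg (by omega), if_neg (by omega), mul_comm, show ((n : ℤ) + 1).natAbs = n + 1 by omega,
      Int.natAbs_natCast]
    norm_cast

theorem Matrix.map_ofPowerSeries_map_lD {ι : Type*} (P : Matrix ι ι ℂ⟦X⟧) :
    (P.map (HahnSeries.ofPowerSeries ℤ ℂ)).map lD =
      (P.map (d⁄dX ℂ)).map (HahnSeries.ofPowerSeries ℤ ℂ) :=
  Matrix.ext fun i j => lD_ofPowerSeries (P i j)

theorem zK_mul_mem_Oz_of_simpleZero {h : ℂ⟦X⟧} (hh : SimpleZero h) {f : K}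
    (hf : HahnSeries.ofPowerSeries ℤ ℂ h * f ∈ Oz) : zK * f ∈ Oz := by
  obtain ⟨u, rfl⟩ := X_dvd_iff.mpr ((coeff_zero_eq_constantCoeff_apply h).symm.trans hh.1)
  have hu : IsUnit u := by
    rw [isUnit_iff_constantCoeff, ← coeff_zero_eq_constantCoeff_apply, ← coeff_succ_X_mul]
    exact hh.2.isUnit
  obtain ⟨v, hv⟩ := hu.exists_left_inv
  convert mul_mem (⟨v, rfl⟩ : HahnSeries.ofPowerSeries ℤ ℂ v ∈ Oz) hf using 1
  rw [map_mul, ← mul_assoc, mul_left_comm, ← map_mul, hv, map_one, mul_one]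
  rfl

section GaugeCoefficients

variable (A : Matrix (Fin 2) (Fin 2) Khat) {R : Matrix (Fin 2) (Fin 2) Khat}

theorem mul_lamGauge (hR : IsUnit R) : R * lamGauge A R = A * R + (X : Khat) • R.map pD := by
  have hdet := (isUnit_iff_isUnit_det R).mp hR
  rw [lamGauge, Matrix.mul_add, Matrix.mul_smul R (X : Khat), mul_nonsing_inv_cancel_left _ _ hdet,
    ← Matrix.mul_assoc, ← Matrix.mul_assoc, mul_nonsing_inv _ hdet, Matrix.one_mul]

theorem lamGauge_coeff_zero (hR : IsUnit R) :
    R.map ev0 * (lamGauge A R).map ev0 = A.map ev0 * R.map ev0 := by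
  have := congrArg (Matrix.map · ev0) (mul_lamGauge A hR)
  simp only [Matrix.map_add _ (map_add ev0), Matrix.map_mul] at this
  rw [this, add_eq_left]
  ext i j
  simp [ev0]

theorem lamGauge_coeff_one (hR : IsUnit R) :
    R.map ev0 * (lamGauge A R).map (coeff 1) + R.map (coeff 1) * (lamGauge A R).map ev0 =
      A.map ev0 * R.map (coeff 1) + A.map (coeff 1) * R.map ev0 + (R.map ev0).map lD := by
  have := congrArg (Matrix.map · (coeff 1)) (mul_lamGauge A hR)
  simp only [Matrix.map_add _ (map_add (coeff 1)), map_coeff_one_mul] at this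
  rw [ev0, this]
  congr 1
  ext i j
  simp [pD, coeff_succ_X_mul]

end GaugeCoefficients

/-- Suppose `A ∈ M₂(ℂ((z))[[λ]])` is diagonal and
`R ∈ M₂(ℂ((z))[[λ]])` is invertible with `R(z,0) ∈ M₂(ℂ[[z]])` and `det R(z,0)` having a
simple zero at `z = 0`. If `Gauge_λ(A,R) ∈ M₂(ℂ[[z,λ]])`, then `z·A₁ ∈ M₂(ℂ[[z]])`. -/
theorem stmt12 (A : Matrix (Fin 2) (Fin 2) Khat)
    (hdiag : ∀ i j, i ≠ j → A i j = 0)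
    (R : Matrix (Fin 2) (Fin 2) Khat) (hR : IsUnit R)
    (hR0 : ∀ i j, (R.map ev0) i j ∈ Oz)
    (hdet : ∃ h : PowerSeries ℂ, (R.map ev0).det = HahnSeries.ofPowerSeries ℤ ℂ h ∧
      SimpleZero h)
    (hgauge : ∀ i j, MemOhat (lamGauge A R i j)) :
    ∀ i j, zK * PowerSeries.coeff (R := K) 1 (A i j) ∈ Oz := by
  obtain ⟨h, hdet_eq, hh⟩ := hdet
  have hR₀ : (R.map ev0).det ≠ 0 := by
    rw [hdet_eq, ne_eq, map_eq_zero_iff _ HahnSeries.ofPowerSeries_injective]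
    rintro rfl
    exact hh.2 (map_zero _)
  have hA₀ : (A.map ev0).IsDiag := IsDiag.map (fun i j hij => hdiag i j hij) (map_zero ev0)
  obtain ⟨P, hP⟩ := (R.map ev0).exists_map_eq_of_forall_mem_range hR0
  obtain ⟨Q, hQ⟩ :=
    ((lamGauge A R).map (coeff 1)).exists_map_eq_of_forall_mem_range fun i j => hgauge i j 1
  intro i j
  rcases eq_or_ne i j with rfl | hij
  · have key := det_mul_apply_self_eq_of_gauge_coeffs hA₀ hR₀ (lamGauge_coeff_zero A hR)
      (lamGauge_coeff_one A hR) i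
    rw [map_apply, hdet_eq] at key
    apply zK_mul_mem_Oz_of_simpleZero hh
    rw [key, ← hP, ← hQ, map_ofPowerSeries_map_lD]
    refine ⟨((P * Q - P.map (d⁄dX ℂ)) * P.adjugate) i i, ?_⟩
    simp only [← RingHom.mapMatrix_apply, ← RingHom.map_adjugate, ← map_mul, ← map_sub]
    rfl
  · simp [hdiag i j hij, zero_mem]
end
end
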